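/- arXiv:2405.15480 — 2 statements merged into one kernel-verified Lean document; each statement's English description precedes it below -/
import Mathlib

section
/- Let A : Ω → Sym_p(ℝ) be a measurable map from a probability space to real symmetric p×p matrices with E[‖A‖_F²] < ∞, and define the linear operator 𝓕 on real symmetric p×p matrices by 𝓕(M) = E[A M Aᵀ]. Let ν = sup{‖𝓕(M)‖_F : M symmetric, ‖M‖_F = 1}. If 𝓕 is not identically zero, then ν > 0 and there exists a nonzero positive semidefinite matrix M* with 𝓕(M*) = ν·M*; in particular the supremum is attained at a positive semidefinite matrix. -/
/-!
For the Frobenius inner product, `𝓕` is self-adjoint on symmetric matrices and positive on the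
PSD cone: `⟪𝓕 X, Y⟫ ≥ 0` for PSD `X, Y`. A symmetric `X` splits as `X⁺ - X⁻` with `X⁺, X⁻` PSD
and orthogonal, so `|X| = X⁺ + X⁻` has the norm of `X` and `|⟪𝓕 X, X⟫| ≤ ⟪𝓕 |X|, |X|⟫`.
Hence the Rayleigh quotient `⟪𝓕 X, X⟫` attains its maximum over the unit sphere at a PSD
matrix, that maximum dominates `|⟪𝓕 X, X⟫|` and so equals the operator norm of the
self-adjoint `𝓕`, and a maximiser of the Rayleigh quotient is an eigenvector.
-/

open MeasureTheory Matrix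

/-- The Frobenius norm of a real matrix. -/
noncomputable def frobNorm {p : ℕ} (M : Matrix (Fin p) (Fin p) ℝ) : ℝ :=
  Real.sqrt (∑ i, ∑ j, (M i j) ^ 2)

/-- The linearized state-evolution operator `𝓕(M) = E[A M Aᵀ]`. -/
noncomputable def linOp {Ω : Type*} [MeasurableSpace Ω] (P : Measure Ω) {p : ℕ}
    (A : Ω → Matrix (Fin p) (Fin p) ℝ) (M : Matrix (Fin p) (Fin p) ℝ) :
    Matrix (Fin p) (Fin p) ℝ :=
  Matrix.of fun i j => ∫ ω, (A ω * M * (A ω)ᵀ) i j ∂P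

open Metric
open scoped RealInnerProductSpace MatrixOrder

namespace ContinuousLinearMap

variable {𝕜 E : Type*} [RCLike 𝕜] [NormedAddCommGroup E] [InnerProductSpace 𝕜 E]

theorem opNorm_le_of_abs_reApplyInnerSelf_le {T : E →L[𝕜] E} (hT : (T : E →ₗ[𝕜] E).IsSymmetric)
    {c : ℝ} (hc : 0 ≤ c) (h : ∀ x ∈ sphere (0 : E) 1, |T.reApplyInnerSelf x| ≤ c) : ‖T‖ ≤ c := by
  rw [T.norm_eq_iSup_rayleighQuotient hT]
  refine ciSup_le fun x => ?_
  rcases eq_or_ne x 0 with rfl | hx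
  · simpa using hc
  obtain ⟨u, hu, hux⟩ : T.rayleighQuotient x ∈ T.rayleighQuotient '' sphere 0 1 := by
    rw [← T.image_rayleigh_eq_image_rayleigh_sphere one_pos]
    exact ⟨x, hx, rfl⟩
  rw [← hux, rayleighQuotient, mem_sphere_zero_iff_norm.1 hu, one_pow, div_one]
  exact h u hu

end ContinuousLinearMap

section OrthogonalDecomposition

variable {E : Type*} [NormedAddCommGroup E] [InnerProductSpace ℝ E]

theorem LinearMap.IsSymmetric.abs_inner_sub_le_inner_add {T : E →ₗ[ℝ] E} (hT : T.IsSymmetric)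
    {q r : E} (hq : 0 ≤ ⟪T q, q⟫) (hr : 0 ≤ ⟪T r, r⟫) (hqr : 0 ≤ ⟪T q, r⟫) :
    |⟪T (q - r), q - r⟫| ≤ ⟪T (q + r), q + r⟫ := by
  have hrq : ⟪T r, q⟫ = ⟪T q, r⟫ := by rw [hT, real_inner_comm]
  simp only [map_sub, map_add, inner_sub_left, inner_sub_right, inner_add_left, inner_add_right,
    hrq]
  exact abs_le.2 ⟨by linarith, by linarith⟩

theorem exists_mem_norm_eq_abs_inner_le {K : Set E} (hK_add : ∀ x ∈ K, ∀ y ∈ K, x + y ∈ K)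
    (hK_decomp : ∀ x, ∃ q ∈ K, ∃ r ∈ K, x = q - r ∧ ⟪q, r⟫ = 0)
    {T : E →ₗ[ℝ] E} (hT : T.IsSymmetric) (hTK : ∀ x ∈ K, ∀ y ∈ K, 0 ≤ ⟪T x, y⟫) (x : E) :
    ∃ z ∈ K, ‖z‖ = ‖x‖ ∧ |⟪T x, x⟫| ≤ ⟪T z, z⟫ := by
  obtain ⟨q, hq, r, hr, rfl, hqr⟩ := hK_decomp x
  refine ⟨q + r, hK_add q hq r hr, ?_, ?_⟩
  · exact (norm_sub_eq_norm_add (real_inner_comm q r ▸ hqr)).symm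
  · exact hT.abs_inner_sub_le_inner_add (hTK q hq q hq) (hTK r hr r hr) (hTK q hq r hr)

theorem exists_mem_norm_eq_one_apply_eq_opNorm_smul [FiniteDimensional ℝ E] [Nontrivial E]
    {K : Set E} (hK_add : ∀ x ∈ K, ∀ y ∈ K, x + y ∈ K)
    (hK_decomp : ∀ x, ∃ q ∈ K, ∃ r ∈ K, x = q - r ∧ ⟪q, r⟫ = 0)
    {T : E →L[ℝ] E} (hT : (T : E →ₗ[ℝ] E).IsSymmetric) (hTK : ∀ x ∈ K, ∀ y ∈ K, 0 ≤ ⟪T x, y⟫) :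
    ∃ z ∈ K, ‖z‖ = 1 ∧ T z = ‖T‖ • z := by
  have hdom := exists_mem_norm_eq_abs_inner_le hK_add hK_decomp hT hTK
  obtain ⟨y, hy, hy_max⟩ := (isCompact_sphere (0 : E) 1).exists_isMaxOn
    (NormedSpace.sphere_nonempty.2 zero_le_one) T.reApplyInnerSelf_continuous.continuousOn
  obtain ⟨z, hzK, hzy, hyz⟩ := hdom y
  have hz1 : ‖z‖ = 1 := hzy.trans (mem_sphere_zero_iff_norm.1 hy)
  have hz_max : IsMaxOn T.reApplyInnerSelf (sphere 0 1) z := fun x hx =>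
    (hy_max hx).trans ((le_abs_self _).trans hyz)
  have hnorm : ‖T‖ = T.reApplyInnerSelf z := by
    refine le_antisymm
      (T.opNorm_le_of_abs_reApplyInnerSelf_le hT (hTK z hzK z hzK) fun x hx => ?_) ?_
    · obtain ⟨w, -, hwx, hxw⟩ := hdom x
      exact hxw.trans <| hz_max <| mem_sphere_zero_iff_norm.2 <|
        hwx.trans (mem_sphere_zero_iff_norm.1 hx)
    · simpa [ContinuousLinearMap.rayleighQuotient, hz1] using
        (le_abs_self _).trans (T.rayleighQuotient_le_norm z)
  have : CompleteSpace E := FiniteDimensional.complete ℝ E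
  have hextr : IsLocalExtrOn T.reApplyInnerSelf (sphere 0 ‖z‖) z := hz1 ▸ Or.inr hz_max.localize
  refine ⟨z, hzK, hz1, ?_⟩
  simpa [ContinuousLinearMap.rayleighQuotient, hnorm, hz1] using
    (ContinuousLinearMap.isSelfAdjoint_iff_isSymmetric.2 hT).eq_smul_self_of_isLocalExtrOn_real
      hextr

theorem LinearMap.IsSymmetric.exists_mem_norm_eq_one_apply_eq_sSup_smul [FiniteDimensional ℝ E]
    {T : E →ₗ[ℝ] E} (hT : T.IsSymmetric) (hT0 : T ≠ 0)
    {K : Set E} (hK_add : ∀ x ∈ K, ∀ y ∈ K, x + y ∈ K)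
    (hK_decomp : ∀ x, ∃ q ∈ K, ∃ r ∈ K, x = q - r ∧ ⟪q, r⟫ = 0)
    (hTK : ∀ x ∈ K, ∀ y ∈ K, 0 ≤ ⟪T x, y⟫) :
    0 < sSup ((fun x => ‖T x‖) '' sphere 0 1) ∧
      ∃ z ∈ K, ‖z‖ = 1 ∧ T z = sSup ((fun x => ‖T x‖) '' sphere 0 1) • z := by
  have : Nontrivial E := by
    by_contra h
    rw [not_nontrivial_iff_subsingleton] at h
    exact hT0 (LinearMap.ext fun x => Subsingleton.elim _ _)
  set T' := LinearMap.toContinuousLinearMap T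
  rw [show sSup ((fun x => ‖T x‖) '' sphere 0 1) = ‖T'‖ from T'.sSup_sphere_eq_norm]
  have hT'0 : T' ≠ 0 := fun h => hT0 ((LinearEquiv.map_eq_zero_iff _).1 h)
  obtain ⟨z, hzK, hz1, hTz⟩ :=
    exists_mem_norm_eq_one_apply_eq_opNorm_smul (T := T') hK_add hK_decomp hT hTK
  exact ⟨norm_pos_iff.2 hT'0, z, hzK, hz1, hTz⟩

end OrthogonalDecomposition

attribute [local instance] Matrix.frobeniusNormedAddCommGroup Matrix.frobeniusNormedSpace

noncomputable abbrev Matrix.frobeniusInnerProductSpace {m n : Type*} [Fintype m] [Fintype n] :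
    InnerProductSpace ℝ (Matrix m n ℝ) where
  inner X Y := ∑ i, ∑ j, X i j * Y i j
  norm_sq_eq_re_inner X := by
    rw [frobenius_norm_def, ← Real.sqrt_eq_rpow, Real.sq_sqrt (by positivity), RCLike.re_to_real]
    simp only [Real.rpow_two, Real.norm_eq_abs, sq, abs_mul_abs_self]
  conj_inner_symm X Y := by simp only [conj_trivial, mul_comm]
  add_left X Y Z := by simp only [Matrix.add_apply, add_mul, Finset.sum_add_distrib]
  smul_left X Y r := by
    simp only [Matrix.smul_apply, smul_eq_mul, conj_trivial, Finset.mul_sum, mul_assoc]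

attribute [local instance] Matrix.frobeniusInnerProductSpace

theorem frobNorm_eq_norm {p : ℕ} (M : Matrix (Fin p) (Fin p) ℝ) : frobNorm M = ‖M‖ := by
  simp only [frobNorm, norm_eq_sqrt_real_inner, sq]
  rfl

namespace Matrix

variable {n : Type*}

theorem isSelfAdjoint_iff_isSymm {M : Matrix n n ℝ} : IsSelfAdjoint M ↔ M.IsSymm :=
  isHermitian_iff_isSelfAdjoint.symm.trans isHermitian_iff_isSymm

variable [Fintype n]

theorem IsHermitian.exists_posSemidef_sub_eq [DecidableEq n] {X : Matrix n n ℝ}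
    (hX : X.IsHermitian) :
    ∃ Q R : Matrix n n ℝ, Q.PosSemidef ∧ R.PosSemidef ∧ X = Q - R ∧ Q * R = 0 :=
  ⟨X⁺, X⁻, (CFC.posPart_nonneg X).posSemidef, (CFC.negPart_nonneg X).posSemidef,
    (CFC.posPart_sub_negPart X hX.isSelfAdjoint).symm, CFC.posPart_mul_negPart X⟩

theorem frobenius_inner_def {m : Type*} [Fintype m] (X Y : Matrix m n ℝ) :
    ⟪X, Y⟫ = ∑ i, ∑ j, X i j * Y i j := rfl

theorem frobenius_inner_eq_trace (X Y : Matrix n n ℝ) : ⟪X, Y⟫ = (Y * Xᵀ).trace := by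
  simp only [frobenius_inner_def, trace, diag, mul_apply, transpose_apply]
  exact Finset.sum_congr rfl fun i _ => Finset.sum_congr rfl fun j _ => mul_comm _ _

theorem frobenius_inner_mul_mul_transpose (B X Y : Matrix n n ℝ) :
    ⟪B * X * Bᵀ, Y⟫ = ⟪X, Bᵀ * Y * B⟫ := by
  simp only [frobenius_inner_eq_trace, transpose_mul, transpose_transpose]
  rw [← Matrix.mul_assoc, ← Matrix.mul_assoc, trace_mul_comm]
  simp only [Matrix.mul_assoc]

theorem PosSemidef.frobenius_inner_nonneg [DecidableEq n] {X Y : Matrix n n ℝ} (hX : X.PosSemidef)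
    (hY : Y.PosSemidef) : 0 ≤ ⟪X, Y⟫ := by
  obtain ⟨B, rfl⟩ := CStarAlgebra.nonneg_iff_eq_star_mul_self.mp hX.nonneg
  rw [frobenius_inner_eq_trace, star_eq_conjTranspose, conjTranspose_eq_transpose_of_trivial,
    transpose_mul, transpose_transpose, ← Matrix.mul_assoc, trace_mul_comm]
  simpa [Matrix.mul_assoc, conjTranspose_eq_transpose_of_trivial] using
    (hY.mul_mul_conjTranspose_same B).trace_nonneg

theorem IsHermitian.frobenius_inner_eq_zero_of_mul_eq_zero {Q R : Matrix n n ℝ}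
    (hQ : Q.IsHermitian) (hQR : Q * R = 0) : ⟪Q, R⟫ = 0 := by
  rw [frobenius_inner_eq_trace, ← conjTranspose_eq_transpose_of_trivial, hQ.eq, trace_mul_comm,
    hQR, trace_zero]

theorem exists_posSemidef_sub_eq_frobenius_inner_eq_zero [DecidableEq n]
    (X : selfAdjoint.submodule ℝ (Matrix n n ℝ)) :
    ∃ Q ∈ {Y : selfAdjoint.submodule ℝ (Matrix n n ℝ) | (Y : Matrix n n ℝ).PosSemidef},
      ∃ R ∈ {Y : selfAdjoint.submodule ℝ (Matrix n n ℝ) | (Y : Matrix n n ℝ).PosSemidef},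
        X = Q - R ∧ ⟪Q, R⟫ = 0 := by
  obtain ⟨Q, R, hQ, hR, hX, hQR⟩ :=
    (isHermitian_iff_isSelfAdjoint.2 X.2).exists_posSemidef_sub_eq
  exact ⟨⟨Q, hQ.isHermitian.isSelfAdjoint⟩, hQ, ⟨R, hR.isHermitian.isSelfAdjoint⟩, hR,
    Subtype.ext hX, hQ.isHermitian.frobenius_inner_eq_zero_of_mul_eq_zero hQR⟩

end Matrix

section LinOp

variable {Ω : Type*} [MeasurableSpace Ω] {P : Measure Ω} {p : ℕ}
  {A : Ω → Matrix (Fin p) (Fin p) ℝ}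

theorem memLp_two_apply (hAmeas : ∀ i j, Measurable fun ω => A ω i j)
    (hAint : Integrable (fun ω => ∑ i, ∑ j, (A ω i j) ^ 2) P) (i j : Fin p) :
    MemLp (fun ω => A ω i j) 2 P := by
  refine (memLp_two_iff_integrable_sq (hAmeas i j).aestronglyMeasurable).2 <|
    hAint.mono' ((hAmeas i j).pow_const 2).aestronglyMeasurable <| .of_forall fun ω => ?_
  rw [Real.norm_of_nonneg (sq_nonneg _)]
  exact (Finset.single_le_sum (fun j _ => sq_nonneg (A ω i j)) (Finset.mem_univ j)).trans <|
    Finset.single_le_sum (f := fun i => ∑ j, (A ω i j) ^ 2)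
      (fun i _ => Finset.sum_nonneg fun j _ => sq_nonneg _) (Finset.mem_univ i)

theorem integrable_mul_mul_transpose_apply (hAmeas : ∀ i j, Measurable fun ω => A ω i j)
    (hAint : Integrable (fun ω => ∑ i, ∑ j, (A ω i j) ^ 2) P)
    (M : Matrix (Fin p) (Fin p) ℝ) (i j : Fin p) :
    Integrable (fun ω => (A ω * M * (A ω)ᵀ) i j) P := by
  simp only [mul_apply, transpose_apply, Finset.sum_mul]
  refine integrable_finsetSum _ fun l _ => integrable_finsetSum _ fun k _ => ?_
  refine (((memLp_two_apply hAmeas hAint i k).integrable_mul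
    (memLp_two_apply hAmeas hAint j l)).const_mul (M k l)).congr (.of_forall fun ω => ?_)
  simp only [Pi.mul_apply]
  ring

theorem linOp_isSymm (A : Ω → Matrix (Fin p) (Fin p) ℝ) {M : Matrix (Fin p) (Fin p) ℝ}
    (hM : M.IsSymm) : (linOp P A M).IsSymm := by
  ext i j
  simp only [linOp, transpose_apply, of_apply]
  congr 1 with ω
  rw [← transpose_apply (A ω * M * (A ω)ᵀ), transpose_mul, transpose_mul, transpose_transpose,
    hM.eq, Matrix.mul_assoc]

noncomputable def linOpₗ (hAmeas : ∀ i j, Measurable fun ω => A ω i j)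
    (hAint : Integrable (fun ω => ∑ i, ∑ j, (A ω i j) ^ 2) P) :
    Matrix (Fin p) (Fin p) ℝ →ₗ[ℝ] Matrix (Fin p) (Fin p) ℝ where
  toFun := linOp P A
  map_add' M N := by
    ext i j
    simp only [linOp, of_apply, Matrix.add_apply, Matrix.mul_add, Matrix.add_mul]
    exact integral_add (integrable_mul_mul_transpose_apply hAmeas hAint M i j)
      (integrable_mul_mul_transpose_apply hAmeas hAint N i j)
  map_smul' c M := by
    ext i j
    simp only [linOp, of_apply, Matrix.smul_apply, Matrix.mul_smul, Matrix.smul_mul,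
      RingHom.id_apply, smul_eq_mul]
    exact integral_const_mul c _

theorem inner_linOp_left (hAmeas : ∀ i j, Measurable fun ω => A ω i j)
    (hAint : Integrable (fun ω => ∑ i, ∑ j, (A ω i j) ^ 2) P)
    (X Y : Matrix (Fin p) (Fin p) ℝ) :
    ⟪linOp P A X, Y⟫ = ∫ ω, ⟪A ω * X * (A ω)ᵀ, Y⟫ ∂P := by
  have hint i j := (integrable_mul_mul_transpose_apply hAmeas hAint X i j).mul_const (Y i j)
  simp only [frobenius_inner_def, linOp, of_apply, ← integral_mul_const]
  rw [integral_finsetSum _ fun i _ => integrable_finsetSum _ fun j _ => hint i j]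
  exact Finset.sum_congr rfl fun i _ => (integral_finsetSum _ fun j _ => hint i j).symm

theorem inner_linOp_comm (hAmeas : ∀ i j, Measurable fun ω => A ω i j)
    (hAint : Integrable (fun ω => ∑ i, ∑ j, (A ω i j) ^ 2) P)
    (hAsymm : ∀ ω, (A ω).IsSymm) (X Y : Matrix (Fin p) (Fin p) ℝ) :
    ⟪linOp P A X, Y⟫ = ⟪X, linOp P A Y⟫ := by
  rw [inner_linOp_left hAmeas hAint, real_inner_comm, inner_linOp_left hAmeas hAint]
  congr 1 with ω
  rw [frobenius_inner_mul_mul_transpose, (hAsymm ω).eq, real_inner_comm]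

theorem inner_linOp_nonneg (hAmeas : ∀ i j, Measurable fun ω => A ω i j)
    (hAint : Integrable (fun ω => ∑ i, ∑ j, (A ω i j) ^ 2) P)
    {X Y : Matrix (Fin p) (Fin p) ℝ} (hX : X.PosSemidef) (hY : Y.PosSemidef) :
    0 ≤ ⟪linOp P A X, Y⟫ := by
  rw [inner_linOp_left hAmeas hAint]
  refine integral_nonneg fun ω => ?_
  rw [frobenius_inner_mul_mul_transpose]
  exact hX.frobenius_inner_nonneg <| by
    simpa [conjTranspose_eq_transpose_of_trivial] using hY.conjTranspose_mul_mul_same (A ω)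

noncomputable def linOpSymm (hAmeas : ∀ i j, Measurable fun ω => A ω i j)
    (hAint : Integrable (fun ω => ∑ i, ∑ j, (A ω i j) ^ 2) P) :
    selfAdjoint.submodule ℝ (Matrix (Fin p) (Fin p) ℝ) →ₗ[ℝ]
      selfAdjoint.submodule ℝ (Matrix (Fin p) (Fin p) ℝ) :=
  (linOpₗ hAmeas hAint).restrict fun _ hM =>
    isSelfAdjoint_iff_isSymm.2 (linOp_isSymm A (isSelfAdjoint_iff_isSymm.1 hM))

theorem coe_linOpSymm_apply (hAmeas : ∀ i j, Measurable fun ω => A ω i j)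
    (hAint : Integrable (fun ω => ∑ i, ∑ j, (A ω i j) ^ 2) P)
    (M : selfAdjoint.submodule ℝ (Matrix (Fin p) (Fin p) ℝ)) :
    (linOpSymm hAmeas hAint M : Matrix (Fin p) (Fin p) ℝ) = linOp P A M := rfl

theorem linOpSymm_isSymmetric (hAmeas : ∀ i j, Measurable fun ω => A ω i j)
    (hAint : Integrable (fun ω => ∑ i, ∑ j, (A ω i j) ^ 2) P)
    (hAsymm : ∀ ω, (A ω).IsSymm) : (linOpSymm hAmeas hAint).IsSymmetric :=
  fun X Y => inner_linOp_comm hAmeas hAint hAsymm X Y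

theorem sSup_frobNorm_linOp_eq_sSup_sphere (hAmeas : ∀ i j, Measurable fun ω => A ω i j)
    (hAint : Integrable (fun ω => ∑ i, ∑ j, (A ω i j) ^ 2) P) :
    sSup {x : ℝ | ∃ M : Matrix (Fin p) (Fin p) ℝ,
        M.IsSymm ∧ frobNorm M = 1 ∧ x = frobNorm (linOp P A M)} =
      sSup ((fun M => ‖linOpSymm hAmeas hAint M‖) '' sphere 0 1) := by
  congr 1
  ext x
  simp only [Set.mem_ofPred_eq, Set.mem_image, mem_sphere_zero_iff_norm, frobNorm_eq_norm]
  constructor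
  · rintro ⟨M, hM, hM1, rfl⟩
    exact ⟨⟨M, isSelfAdjoint_iff_isSymm.2 hM⟩, hM1, rfl⟩
  · rintro ⟨M, hM1, rfl⟩
    exact ⟨M, isSelfAdjoint_iff_isSymm.1 M.2, hM1, rfl⟩

end LinOp

theorem kreinRutman_for_linearized_SE_general {Ω : Type*} [MeasurableSpace Ω]
    (P : Measure Ω) {p : ℕ}
    (A : Ω → Matrix (Fin p) (Fin p) ℝ)
    (hAmeas : ∀ i j, Measurable fun ω => A ω i j)
    (hAsymm : ∀ ω, (A ω).IsSymm)
    (hAint : Integrable (fun ω => ∑ i, ∑ j, (A ω i j) ^ 2) P)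
    (hne : ∃ M : Matrix (Fin p) (Fin p) ℝ, M.IsSymm ∧ linOp P A M ≠ 0) :
    0 < sSup {x : ℝ | ∃ M : Matrix (Fin p) (Fin p) ℝ,
        M.IsSymm ∧ frobNorm M = 1 ∧ x = frobNorm (linOp P A M)} ∧
      (∃ Mstar : Matrix (Fin p) (Fin p) ℝ, Mstar.PosSemidef ∧ Mstar ≠ 0 ∧
        linOp P A Mstar =
          (sSup {x : ℝ | ∃ M : Matrix (Fin p) (Fin p) ℝ,
            M.IsSymm ∧ frobNorm M = 1 ∧ x = frobNorm (linOp P A M)}) • Mstar) ∧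
      (∃ M₀ : Matrix (Fin p) (Fin p) ℝ, M₀.PosSemidef ∧ frobNorm M₀ = 1 ∧
        frobNorm (linOp P A M₀) =
          sSup {x : ℝ | ∃ M : Matrix (Fin p) (Fin p) ℝ,
            M.IsSymm ∧ frobNorm M = 1 ∧ x = frobNorm (linOp P A M)}) := by
  rw [sSup_frobNorm_linOp_eq_sSup_sphere hAmeas hAint]
  obtain ⟨M, hM, hTM⟩ := hne
  have hT0 : linOpSymm hAmeas hAint ≠ 0 := fun h =>
    hTM (congrArg Subtype.val (LinearMap.congr_fun h ⟨M, isSelfAdjoint_iff_isSymm.2 hM⟩))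
  obtain ⟨hν, Z, hZ, hZ1, hTZ⟩ :=
    (linOpSymm_isSymmetric hAmeas hAint hAsymm).exists_mem_norm_eq_one_apply_eq_sSup_smul hT0
      (K := {X | (X : Matrix (Fin p) (Fin p) ℝ).PosSemidef}) (fun _ hQ _ hR => hQ.add hR)
      exists_posSemidef_sub_eq_frobenius_inner_eq_zero
      (fun _ hX _ hY => inner_linOp_nonneg hAmeas hAint hX hY)
  have hTZ' := congrArg Subtype.val hTZ
  rw [Submodule.coe_smul] at hTZ'
  have hZ1' : frobNorm (Z : Matrix (Fin p) (Fin p) ℝ) = 1 := (frobNorm_eq_norm _).trans hZ1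
  refine ⟨hν, ⟨Z, hZ, fun h => by simp [h, frobNorm] at hZ1', hTZ'⟩, ⟨Z, hZ, hZ1', ?_⟩⟩
  rw [← coe_linOpSymm_apply hAmeas hAint, hTZ', frobNorm_eq_norm, norm_smul,
    Real.norm_of_nonneg hν.le]
  exact (mul_eq_left₀ hν.ne').2 hZ1

/-- Perron–Frobenius / Krein–Rutman step: if the cone-preserving operator
`𝓕(M) = E[A M Aᵀ]` is not identically zero on symmetric matrices, then its
Frobenius operator norm `ν` over symmetric matrices is positive, is an
eigenvalue with a nonzero positive semidefinite eigenvector `M*`, and the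
supremum is attained at a positive semidefinite matrix. -/
theorem kreinRutman_for_linearized_SE {Ω : Type*} [MeasurableSpace Ω]
    (P : Measure Ω) [IsProbabilityMeasure P] {p : ℕ}
    (A : Ω → Matrix (Fin p) (Fin p) ℝ)
    (hAmeas : ∀ i j, Measurable fun ω => A ω i j)
    (hAsymm : ∀ ω, (A ω).IsSymm)
    (hAint : Integrable (fun ω => ∑ i, ∑ j, (A ω i j) ^ 2) P)
    (hne : ∃ M : Matrix (Fin p) (Fin p) ℝ, M.IsSymm ∧ linOp P A M ≠ 0) :
    0 < sSup {x : ℝ | ∃ M : Matrix (Fin p) (Fin p) ℝ,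
        M.IsSymm ∧ frobNorm M = 1 ∧ x = frobNorm (linOp P A M)} ∧
      (∃ Mstar : Matrix (Fin p) (Fin p) ℝ, Mstar.PosSemidef ∧ Mstar ≠ 0 ∧
        linOp P A Mstar =
          (sSup {x : ℝ | ∃ M : Matrix (Fin p) (Fin p) ℝ,
            M.IsSymm ∧ frobNorm M = 1 ∧ x = frobNorm (linOp P A M)}) • Mstar) ∧
      (∃ M₀ : Matrix (Fin p) (Fin p) ℝ, M₀.PosSemidef ∧ frobNorm M₀ = 1 ∧
        frobNorm (linOp P A M₀) =
          sSup {x : ℝ | ∃ M : Matrix (Fin p) (Fin p) ℝ,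
            M.IsSymm ∧ frobNorm M = 1 ∧ x = frobNorm (linOp P A M)}) :=
  kreinRutman_for_linearized_SE_general P A hAmeas hAsymm hAint hne
end

section
/- Let Z = (Z_1, …, Z_p) be a standard Gaussian vector in ℝ^p with p ≥ 1, and let Y = Σ_{j=1}^p sign(Z_j). Then for every k ∈ {1, …, p}, E[Z_k | σ(Y)] = √(2/π)·Y/p almost surely. -/
/-!
Test against `φ(Y)` for bounded measurable `φ`. Integrating out `Z_k` first, with the other
coordinates fixed, `φ(Y)` becomes a function of `sign Z_k` alone, and for a standard Gaussian `X`
`E[X ψ(sign X)] = √(2/π) E[sign X ψ(sign X)]`: off `{0}` one has `ψ(sign x) = a + b sign x`, and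
`E X = E sign X = 0`, `E|X| = √(2/π)`. Hence `E[Z_k φ(Y)] = √(2/π) E[sign Z_k φ(Y)]`. The
coordinates are exchangeable and `Y` is symmetric in them, so `E[sign Z_j φ(Y)]` does not depend
on `j`; summing over `j` gives `E[sign Z_k φ(Y)] = E[Y φ(Y)] / p`.
-/

open MeasureTheory ProbabilityTheory Real Set

theorem condExp_comap_comp_eq_of_forall_integral_mul_indicator {Ω E β : Type*}
    {mΩ : MeasurableSpace Ω} [MeasurableSpace E] [MeasurableSpace β] {P : Measure Ω}
    [IsFiniteMeasure P] {μ : Measure E} {X : Ω → E} (hX : Measurable X) (hXμ : P.map X = μ)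
    {S : E → β} (hS : Measurable S) {f : E → ℝ} (hf : Integrable f μ) {h : β → ℝ}
    (hh : Measurable h) (hhS : Integrable (h ∘ S) μ)
    (H : ∀ A, MeasurableSet A →
      ∫ x, f x * A.indicator 1 (S x) ∂μ = ∫ x, h (S x) * A.indicator 1 (S x) ∂μ) :
    P[f ∘ X | MeasurableSpace.comap (S ∘ X) inferInstance] =ᵐ[P] h ∘ S ∘ X := by
  subst hXμ
  have hSX : Measurable (S ∘ X) := hS.comp hX
  have hset {g : E → ℝ} (hg : AEStronglyMeasurable g (P.map X)) {A : Set β}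
      (hA : MeasurableSet A) :
      ∫ ω in (S ∘ X) ⁻¹' A, g (X ω) ∂P = ∫ x, g x * A.indicator 1 (S x) ∂P.map X := by
    rw [← integral_indicator (hSX hA), integral_map (f := fun x => g x * A.indicator 1 (S x))
      hX.aemeasurable (hg.mul ((measurable_one.indicator hA).comp hS).aestronglyMeasurable)]
    congr 1 with ω
    by_cases hω : S (X ω) ∈ A <;> simp [hω]
  refine (ae_eq_condExp_of_forall_setIntegral_eq hSX.comap_le (hf.comp_measurable hX)
    (fun s _ _ => (hhS.comp_measurable hX).integrableOn) ?_ ?_).symm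
  · rintro _ ⟨A, hA, rfl⟩ _
    exact (hset hhS.1 hA).trans ((H A hA).symm.trans (hset hf.1 hA).symm)
  · exact (hh.comp (Measurable.of_comap_le le_rfl)).aestronglyMeasurable

@[fun_prop]
lemma Real.measurable_sign : Measurable Real.sign :=
  Monotone.measurable fun a b hab => by
    unfold Real.sign; split_ifs <;> linarith

lemma Real.abs_sign_le_one (x : ℝ) : |Real.sign x| ≤ 1 := by
  rcases Real.sign_apply_eq x with h | h | h <;> simp [h]

lemma integrable_sign_comp {α : Type*} [MeasurableSpace α] (μ : Measure α) [IsFiniteMeasure μ]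
    {f : α → ℝ} (hf : Measurable f) : Integrable (fun a => Real.sign (f a)) μ :=
  .of_bound (Real.measurable_sign.comp hf).aestronglyMeasurable 1
    (.of_forall fun a => Real.abs_sign_le_one (f a))

lemma integral_sign_gaussianReal (v : NNReal) : ∫ x, Real.sign x ∂gaussianReal 0 v = 0 := by
  have h : ∫ x, Real.sign x ∂gaussianReal 0 v = ∫ x, Real.sign (-x) ∂gaussianReal 0 v := by
    conv_lhs => rw [← neg_zero, ← gaussianReal_map_neg]
    exact integral_map (by fun_prop) Real.measurable_sign.aestronglyMeasurable
  simp only [Real.sign_neg, integral_neg] at h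
  linarith

lemma integral_Ioi_mul_exp_neg_half_mul_sq :
    ∫ x in Ioi (0 : ℝ), x * rexp (-(1 / 2 * x ^ 2)) = 1 := by
  have h := integral_rpow_mul_exp_neg_mul_rpow (p := 2) (q := 1) (b := 1 / 2)
    two_pos (by norm_num) (by norm_num)
  norm_num at h
  exact h

lemma integral_abs_gaussianReal : ∫ x, |x| ∂gaussianReal 0 1 = √(2 / π) := by
  have hpdf (x : ℝ) : gaussianPDFReal 0 1 x • |x|
      = (√(2 * π))⁻¹ * (|x| * rexp (-(1 / 2 * |x| ^ 2))) := by
    simp only [gaussianPDFReal, NNReal.coe_one, mul_one, sub_zero, smul_eq_mul, sq_abs]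
    ring_nf
  simp_rw [integral_gaussianReal_eq_integral_smul one_ne_zero, hpdf, integral_const_mul,
    integral_comp_abs (f := fun y => y * rexp (-(1 / 2 * y ^ 2))),
    integral_Ioi_mul_exp_neg_half_mul_sq]
  rw [sqrt_div' _ pi_pos.le, sqrt_mul zero_le_two]
  field_simp
  norm_num

lemma integral_mul_comp_sign_gaussianReal (ψ : ℝ → ℝ) :
    ∫ x, x * ψ (Real.sign x) ∂gaussianReal 0 1
      = √(2 / π) * ∫ x, Real.sign x * ψ (Real.sign x) ∂gaussianReal 0 1 := by
  have := nullSingletonClass_gaussianReal (μ := 0) one_ne_zero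
  set a := (ψ 1 + ψ (-1)) / 2
  set b := (ψ 1 - ψ (-1)) / 2
  have hx : Integrable (fun x : ℝ => x) (gaussianReal 0 1) :=
    (memLp_id_gaussianReal 1).integrable le_rfl
  have h_lhs : (fun x => x * ψ (Real.sign x)) =ᵐ[gaussianReal 0 1]
      fun x => a * x + b * |x| := by
    filter_upwards [Measure.ae_ne _ 0] with x hx0
    rcases hx0.lt_or_gt with h | h
    · rw [Real.sign_of_neg h, abs_of_neg h]; ring
    · rw [Real.sign_of_pos h, abs_of_pos h]; ring
  have h_rhs : (fun x => Real.sign x * ψ (Real.sign x)) =ᵐ[gaussianReal 0 1]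
      fun x => a * Real.sign x + b := by
    filter_upwards [Measure.ae_ne _ 0] with x hx0
    rcases hx0.lt_or_gt with h | h
    · rw [Real.sign_of_neg h]; ring
    · rw [Real.sign_of_pos h]; ring
  rw [integral_congr_ae h_lhs, integral_congr_ae h_rhs,
    integral_add (hx.const_mul a) (hx.abs.const_mul b),
    integral_add ((integrable_sign_comp _ measurable_id').const_mul a) (integrable_const b),
    integral_const_mul, integral_const_mul, integral_const_mul, integral_id_gaussianReal,
    integral_abs_gaussianReal, integral_sign_gaussianReal]
  simp only [mul_zero, zero_add, integral_const, probReal_univ, smul_eq_mul, one_mul]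
  ring

noncomputable abbrev stdGaussian (ι : Type*) [Fintype ι] : Measure (ι → ℝ) :=
  Measure.pi fun _ : ι => gaussianReal 0 1

section SumSign

variable {ι : Type*} [Fintype ι]

noncomputable def sumSign (z : ι → ℝ) : ℝ := ∑ i, Real.sign (z i)

@[fun_prop]
lemma measurable_sumSign : Measurable (sumSign (ι := ι)) :=
  Finset.measurable_sum _ fun i _ => Real.measurable_sign.comp (measurable_pi_apply i)

lemma abs_sumSign_le (z : ι → ℝ) : |sumSign z| ≤ Fintype.card ι := by
  calc |sumSign z| ≤ ∑ i, |Real.sign (z i)| := Finset.abs_sum_le_sum_abs _ _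
    _ ≤ ∑ _i : ι, (1 : ℝ) := Finset.sum_le_sum fun i _ => Real.abs_sign_le_one _
    _ = Fintype.card ι := by simp

lemma integral_comp_eval_mul_comp_sumSign_index_invariant [DecidableEq ι] (ν : Measure ℝ)
    [SigmaFinite ν] (f φ : ℝ → ℝ) (j k : ι) :
    ∫ z, f (z j) * φ (sumSign z) ∂Measure.pi (fun _ : ι => ν)
      = ∫ z, f (z k) * φ (sumSign z) ∂Measure.pi (fun _ : ι => ν) := by
  let σ := Equiv.swap j k
  let e := MeasurableEquiv.piCongrLeft (fun _ : ι => ℝ) σ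
  have he : MeasurePreserving e (Measure.pi fun _ : ι => ν) (Measure.pi fun _ : ι => ν) :=
    measurePreserving_piCongrLeft (fun _ : ι => ν) σ
  have he_apply (z : ι → ℝ) (i : ι) : e z (σ i) = z i :=
    MeasurableEquiv.piCongrLeft_apply_apply (β := fun _ : ι => ℝ) σ z i
  have hsumSign (z : ι → ℝ) : sumSign (e z) = sumSign z := by
    rw [sumSign, ← Equiv.sum_comp σ]
    simp only [he_apply, sumSign]
  rw [← he.integral_comp e.measurableEmbedding]
  congr 1 with z
  have hj : e z j = z k := by simpa [σ] using he_apply z k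
  rw [hj, hsumSign]

end SumSign

lemma sumSign_insertNth {n : ℕ} (k : Fin (n + 1)) (x : ℝ) (w : Fin n → ℝ) :
    sumSign (Fin.insertNth k x w) = Real.sign x + sumSign w := by
  simp [sumSign, Fin.sum_univ_succAbove _ k]

lemma integral_comp_eval_sumSign_eq_integral_prod {n : ℕ} (k : Fin (n + 1))
    (f : ℝ → ℝ → ℝ) :
    ∫ z, f (z k) (sumSign z) ∂stdGaussian (Fin (n + 1))
      = ∫ q : ℝ × (Fin n → ℝ), f q.1 (Real.sign q.1 + sumSign q.2)
          ∂(gaussianReal 0 1).prod (stdGaussian (Fin n)) := by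
  let e := MeasurableEquiv.piFinSuccAbove (fun _ : Fin (n + 1) => ℝ) k
  have he : MeasurePreserving e.symm ((gaussianReal 0 1).prod (stdGaussian (Fin n)))
      (stdGaussian (Fin (n + 1))) :=
    (measurePreserving_piFinSuccAbove (fun _ : Fin (n + 1) => gaussianReal 0 1) k).symm e
  rw [← he.integral_comp e.symm.measurableEmbedding]
  simp [e, MeasurableEquiv.piFinSuccAbove_symm_apply, Fin.insertNthEquiv, sumSign_insertNth]

lemma integral_eval_mul_comp_sumSign_eq_sqrt_mul_integral_sign {n : ℕ} (k : Fin (n + 1))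
    {φ : ℝ → ℝ} (hφ : Measurable φ) {C : ℝ} (hφC : ∀ y, |φ y| ≤ C) :
    ∫ z, z k * φ (sumSign z) ∂stdGaussian (Fin (n + 1))
      = √(2 / π) * ∫ z, Real.sign (z k) * φ (sumSign z) ∂stdGaussian (Fin (n + 1)) := by
  have hφS : Measurable fun q : ℝ × (Fin n → ℝ) => φ (Real.sign q.1 + sumSign q.2) :=
    by fun_prop
  have hφS_le : ∀ᵐ q ∂(gaussianReal 0 1).prod (stdGaussian (Fin n)),
      ‖φ (Real.sign q.1 + sumSign q.2)‖ ≤ C := .of_forall fun q => hφC _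
  have hint_id : Integrable (fun q : ℝ × (Fin n → ℝ) => q.1 * φ (Real.sign q.1 + sumSign q.2))
      ((gaussianReal 0 1).prod (stdGaussian (Fin n))) :=
    (((memLp_id_gaussianReal 1).integrable le_rfl).comp_fst
      (stdGaussian (Fin n))).mul_bdd hφS.aestronglyMeasurable hφS_le
  have hint_sign :=
    (integrable_sign_comp _ measurable_fst).mul_bdd hφS.aestronglyMeasurable hφS_le
  rw [integral_comp_eval_sumSign_eq_integral_prod k (fun x s => x * φ s),
    integral_comp_eval_sumSign_eq_integral_prod k (fun x s => Real.sign x * φ s),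
    integral_prod_symm _ hint_id, integral_prod_symm _ hint_sign, ← integral_const_mul]
  congr 1 with w
  exact integral_mul_comp_sign_gaussianReal fun u => φ (u + sumSign w)

lemma integral_eval_mul_comp_sumSign_eq_integral_sumSign_mul {n : ℕ} (k : Fin (n + 1))
    {φ : ℝ → ℝ} (hφ : Measurable φ) {C : ℝ} (hφC : ∀ y, |φ y| ≤ C) :
    ∫ z, z k * φ (sumSign z) ∂stdGaussian (Fin (n + 1))
      = ∫ z, √(2 / π) * sumSign z / (n + 1 : ℕ) * φ (sumSign z)
          ∂stdGaussian (Fin (n + 1)) := by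
  have hint (j : Fin (n + 1)) :
      Integrable (fun z => Real.sign (z j) * φ (sumSign z)) (stdGaussian (Fin (n + 1))) :=
    (integrable_sign_comp _ (measurable_pi_apply j)).mul_bdd
      (hφ.comp measurable_sumSign).aestronglyMeasurable (.of_forall fun z => hφC _)
  have hsum : ∫ z, sumSign z * φ (sumSign z) ∂stdGaussian (Fin (n + 1))
      = (n + 1 : ℕ) * ∫ z, Real.sign (z k) * φ (sumSign z) ∂stdGaussian (Fin (n + 1)) := by
    have hmul_sum (z : Fin (n + 1) → ℝ) :
        sumSign z * φ (sumSign z) = ∑ j, Real.sign (z j) * φ (sumSign z) := Finset.sum_mul ..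
    simp_rw [hmul_sum]
    rw [integral_finsetSum _ fun j _ => hint j]
    simp [integral_comp_eval_mul_comp_sumSign_index_invariant _ Real.sign φ _ k]
  have hrw (z : Fin (n + 1) → ℝ) : √(2 / π) * sumSign z / (n + 1 : ℕ) * φ (sumSign z)
      = √(2 / π) / (n + 1 : ℕ) * (sumSign z * φ (sumSign z)) := by ring
  simp_rw [hrw]
  rw [integral_const_mul, hsum,
    integral_eval_mul_comp_sumSign_eq_sqrt_mul_integral_sign k hφ hφC]
  field_simp

theorem committee_conditional_mean_general {Ω : Type*} [MeasurableSpace Ω]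
    (P : Measure Ω) [IsProbabilityMeasure P] {p : ℕ}
    (Z : Ω → Fin p → ℝ) (hZmeas : Measurable Z)
    (hZ : Measure.map Z P = Measure.pi fun _ : Fin p => gaussianReal 0 1)
    (Y : Ω → ℝ) (hY : Y = fun ω => ∑ j, Real.sign (Z ω j)) :
    ∀ k : Fin p,
      P[(fun ω => Z ω k) | MeasurableSpace.comap Y inferInstance]
        =ᵐ[P] fun ω => Real.sqrt (2 / Real.pi) * Y ω / p := by
  subst hY
  intro k
  obtain ⟨n, rfl⟩ := Nat.exists_eq_add_one_of_ne_zero k.pos.ne'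
  have hS_int : Integrable sumSign (stdGaussian (Fin (n + 1))) :=
    .of_bound measurable_sumSign.aestronglyMeasurable _ (.of_forall abs_sumSign_le)
  refine condExp_comap_comp_eq_of_forall_integral_mul_indicator hZmeas hZ measurable_sumSign
    (f := fun z => z k) (h := fun y => √(2 / π) * y / (n + 1 : ℕ))
    (integrable_eval ((memLp_id_gaussianReal 1).integrable le_rfl)) (by fun_prop)
    ((hS_int.const_mul _).div_const _) fun A hA => ?_
  refine integral_eval_mul_comp_sumSign_eq_integral_sumSign_mul k
    (measurable_one.indicator hA) (C := 1) fun y => ?_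
  by_cases hy : y ∈ A <;> simp [hy]

/-- Committee machine: if `Z` is a standard Gaussian vector in `ℝ^p` and
`Y = ∑_j sign(Z_j)`, then `E[Z_k | σ(Y)] = √(2/π)·Y/p` a.s. for every `k`. -/
theorem committee_conditional_mean {Ω : Type*} [MeasurableSpace Ω]
    (P : Measure Ω) [IsProbabilityMeasure P] {p : ℕ} (hp : 1 ≤ p)
    (Z : Ω → Fin p → ℝ) (hZmeas : Measurable Z)
    (hZ : Measure.map Z P = Measure.pi fun _ : Fin p => gaussianReal 0 1)
    (Y : Ω → ℝ) (hY : Y = fun ω => ∑ j, Real.sign (Z ω j)) :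
    ∀ k : Fin p,
      P[(fun ω => Z ω k) | MeasurableSpace.comap Y inferInstance]
        =ᵐ[P] fun ω => Real.sqrt (2 / Real.pi) * Y ω / p :=
  committee_conditional_mean_general P Z hZmeas hZ Y hY
end
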